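/- Let f : ℝᵈ → ℝ be differentiable and G-invariant under a permutation representation ρ, and let x̄ ∈ ℝᵈ satisfy ρ[g] x̄ = x̄ for all g ∈ G. Define the Input-times-Gradient explanation e(x) = (x − x̄) ⊙ ∇f(x). Then e is G-equivariant: e(ρ[g] x) = ρ[g] e(x). -/

import Mathlib

/-! A permutation matrix acts on Euclidean space as a linear isometry, and the gradient of a
function invariant under a linear isometry is equivariant under it. Coordinatewise products
commute with permuting coordinates, and the baseline is fixed, so `e` is equivariant. -/

open InnerProductSpace

section GradientIsometry

variable {𝕜 E F : Type*} [RCLike 𝕜]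
  [NormedAddCommGroup E] [InnerProductSpace 𝕜 E] [CompleteSpace E]
  [NormedAddCommGroup F] [InnerProductSpace 𝕜 F] [CompleteSpace F]

theorem gradient_comp_linearIsometryEquiv (L : E ≃ₗᵢ[𝕜] F) (f : F → 𝕜) (x : E) :
    gradient (f ∘ L) x = L.symm (gradient f (L x)) := by
  refine ext_inner_right 𝕜 fun v => ?_
  calc ⟪gradient (f ∘ L) x, v⟫_𝕜 = fderiv 𝕜 f (L x) (L v) := by
        rw [gradient, toDual_symm_apply, ← L.coe_toContinuousLinearEquiv,
          ContinuousLinearEquiv.comp_right_fderiv]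
        rfl
    _ = ⟪L.symm (gradient f (L x)), v⟫_𝕜 := by
        rw [← L.inner_map_map, L.apply_symm_apply, gradient, toDual_symm_apply]

theorem gradient_apply_linearIsometryEquiv_of_comp_eq {L : E ≃ₗᵢ[𝕜] E} {f : E → 𝕜}
    (hf : f ∘ L = f) (x : E) : gradient f (L x) = L (gradient f x) := by
  conv_rhs => rw [← hf, gradient_comp_linearIsometryEquiv, L.apply_symm_apply]

end GradientIsometry

theorem EuclideanSpace.toLp_mulVec_eq_piLpCongrLeft {𝕜 ι : Type*} [RCLike 𝕜] [Fintype ι]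
    {M : Matrix ι ι 𝕜} {π : Equiv.Perm ι} (hπ : ∀ (v : ι → 𝕜) (i : ι), M.mulVec v i = v (π i))
    (v : EuclideanSpace 𝕜 ι) :
    WithLp.toLp 2 (M.mulVec v) = LinearIsometryEquiv.piLpCongrLeft 2 𝕜 𝕜 π.symm v := by
  ext i
  simp [hπ, Equiv.piCongrLeft'_apply]

theorem input_times_gradient_equivariant_general {d : ℕ} {G : Type*} [Group G]
    (ρ : G → Matrix (Fin d) (Fin d) ℝ)
    (hperm : ∀ g : G, ∃ π : Equiv.Perm (Fin d),
      ∀ (v : Fin d → ℝ) (i : Fin d), (ρ g).mulVec v i = v (π i))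
    (f : EuclideanSpace ℝ (Fin d) → ℝ)
    (hinv : ∀ (g : G) (x : EuclideanSpace ℝ (Fin d)), f (WithLp.toLp 2 ((ρ g).mulVec x)) = f x)
    (xbar : EuclideanSpace ℝ (Fin d))
    (hbar : ∀ g : G, (ρ g).mulVec xbar = xbar)
    (e : EuclideanSpace ℝ (Fin d) → EuclideanSpace ℝ (Fin d))
    (he : ∀ (x : EuclideanSpace ℝ (Fin d)) (i : Fin d),
      e x i = (x i - xbar i) * gradient f x i)
    (g : G) (x : EuclideanSpace ℝ (Fin d)) :
    e (WithLp.toLp 2 ((ρ g).mulVec x)) = (ρ g).mulVec (e x) := by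
  obtain ⟨π, hπ⟩ := hperm g
  set L := LinearIsometryEquiv.piLpCongrLeft 2 ℝ ℝ π.symm
  have hL := EuclideanSpace.toLp_mulVec_eq_piLpCongrLeft hπ
  have hgrad : gradient f (L x) = L (gradient f x) :=
    gradient_apply_linearIsometryEquiv_of_comp_eq
      (funext fun y => by rw [Function.comp_apply, ← hL, hinv]) x
  have hxbar (i : Fin d) : xbar (π i) = xbar i := by
    rw [← hπ xbar, hbar]
  funext i
  rw [hπ, hL, he, he, hgrad]
  simp only [L, LinearIsometryEquiv.piLpCongrLeft_apply, Equiv.piCongrLeft'_apply, Equiv.symm_symm,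
    hxbar]

/-- Input-times-Gradient `e(x) = (x − x̄) ⊙ ∇f(x)` is `G`-equivariant when `f`
is `G`-invariant under a permutation representation `ρ` and the baseline `x̄`
is `G`-invariant. -/
theorem input_times_gradient_equivariant {d : ℕ} {G : Type*} [Group G]
    (ρ : G → Matrix (Fin d) (Fin d) ℝ)
    (hrep : ∀ g₁ g₂ : G, ρ (g₁ * g₂) = ρ g₁ * ρ g₂)
    (hperm : ∀ g : G, ∃ π : Equiv.Perm (Fin d),
      ∀ (v : Fin d → ℝ) (i : Fin d), (ρ g).mulVec v i = v (π i))
    (f : EuclideanSpace ℝ (Fin d) → ℝ)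
    (hdiff : Differentiable ℝ f)
    (hinv : ∀ (g : G) (x : EuclideanSpace ℝ (Fin d)), f (WithLp.toLp 2 ((ρ g).mulVec x)) = f x)
    (xbar : EuclideanSpace ℝ (Fin d))
    (hbar : ∀ g : G, (ρ g).mulVec xbar = xbar)
    (e : EuclideanSpace ℝ (Fin d) → EuclideanSpace ℝ (Fin d))
    (he : ∀ (x : EuclideanSpace ℝ (Fin d)) (i : Fin d),
      e x i = (x i - xbar i) * gradient f x i)
    (g : G) (x : EuclideanSpace ℝ (Fin d)) :
    e (WithLp.toLp 2 ((ρ g).mulVec x)) = (ρ g).mulVec (e x) :=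
  input_times_gradient_equivariant_general ρ hperm f hinv xbar hbar e he g x
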